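/- arXiv:1902.07801 — 3 statements merged into one kernel-verified Lean document; each statement's English description precedes it below -/
import Mathlib

section
/- Let F be a non-archimedean local field, 𝒪 its ring of integers, 𝒫 = ϖ𝒪. Let i, m, 𝔢 be integers with 𝔢 > 0, 0 < m < 𝔢, and z ∈ F with ord(z) = m. If i < m − 𝔢, then there exists x ∈ 𝒫^{-1} ∩ 𝒫^{max{i, i−2m+𝔢}} such that ψ(x) ≠ 1 (for ψ of conductor 𝒪) while 1 − ϖ^{-i}zx ∈ 1 + 𝒫^𝔢; consequently the conjugation matrix [[1+ϖ^{-i}zx, ϖ^{-i}x],[−ϖ^{-i}xz², 1−ϖ^{-i}zx]] lies in the congruence subgroup K(𝔢) = {k ∈ GL(2,𝒪) : k₂₁ ∈ 𝒫^𝔢} with lower-right entry in 1+𝒫^𝔢. -/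
open Pointwise

private lemma zpow_mem_aux {F : Type*} [Field F] (𝒪 : Subring F) {ϖ : F}
    (hϖO : ϖ ∈ 𝒪) {n : ℤ} (hn : 0 ≤ n) : ϖ ^ n ∈ 𝒪 := by
  lift n to ℕ using hn
  rw [zpow_natCast]
  exact pow_mem hϖO n

/-- Let `F` be a non-archimedean local field, `𝒪` its ring of integers, `𝒫 = ϖ𝒪`,
`ψ` an additive character of conductor `𝒪`. Let `𝔢 > 0`, `0 < m < 𝔢`, `z` of valuation `m`,
and `i < m − 𝔢`. Then there exists `x ∈ 𝒫⁻¹ ∩ 𝒫^{max{i, i − 2m + 𝔢}}` with `ψ x ≠ 1` while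
`1 − ϖ^{−i} z x ∈ 1 + 𝒫^𝔢`; consequently the conjugation matrix
`[[1 + ϖ^{−i} z x, ϖ^{−i} x], [−ϖ^{−i} x z², 1 − ϖ^{−i} z x]]` lies in the congruence
subgroup `K(𝔢) = {k ∈ GL(2, 𝒪) : k₂₁ ∈ 𝒫^𝔢}` with lower-right entry in `1 + 𝒫^𝔢`. -/
theorem stmt_11 {F : Type*} [Field F] (𝒪 : Subring F) (ϖ : F) (ψ : AddChar F ℂ)
    (hϖO : ϖ ∈ 𝒪) (hϖ : ϖ ≠ 0)
    -- ψ has conductor 𝒪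
    (hψ1 : ∀ x ∈ (𝒪 : Set F), ψ x = 1)
    (hψ2 : ∃ x ∈ ϖ⁻¹ • (𝒪 : Set F), ψ x ≠ 1)
    (𝔢 m : ℕ) (i : ℤ) (h𝔢 : 0 < 𝔢) (hm1 : 0 < m) (hm2 : m < 𝔢)
    (hi : i < (m : ℤ) - (𝔢 : ℤ))
    (z : F) (hz : ∃ w ∈ 𝒪, (∃ w' ∈ 𝒪, w * w' = 1) ∧ z = ϖ ^ (m : ℤ) * w) :
    ∃ x : F, x ∈ (ϖ ^ (-1 : ℤ)) • (𝒪 : Set F) ∧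
      x ∈ (ϖ ^ (max i (i - 2 * (m : ℤ) + (𝔢 : ℤ)))) • (𝒪 : Set F) ∧
      ψ x ≠ 1 ∧
      ϖ ^ (-i) * z * x ∈ (ϖ ^ (𝔢 : ℤ)) • (𝒪 : Set F) ∧
      1 + ϖ ^ (-i) * z * x ∈ 𝒪 ∧
      ϖ ^ (-i) * x ∈ 𝒪 ∧
      -(ϖ ^ (-i) * x * z ^ 2) ∈ (ϖ ^ (𝔢 : ℤ)) • (𝒪 : Set F) ∧
      1 - ϖ ^ (-i) * z * x ∈ 𝒪 ∧
      (1 - ϖ ^ (-i) * z * x) - 1 ∈ (ϖ ^ (𝔢 : ℤ)) • (𝒪 : Set F) ∧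
      ∃ d ∈ 𝒪,
        (!![1 + ϖ ^ (-i) * z * x, ϖ ^ (-i) * x;
            -(ϖ ^ (-i) * x * z ^ 2), 1 - ϖ ^ (-i) * z * x]).det * d = 1 := by
  obtain ⟨x, ⟨w, hw, hx⟩, hψx⟩ := hψ2
  obtain ⟨u, hu, -, hzu⟩ := hz
  -- basic valuation relations
  have hxw : x = ϖ ^ (-1 : ℤ) * w := by rw [← hx]; simp [smul_eq_mul, zpow_neg_one]
  set M : ℤ := max i (i - 2 * (m : ℤ) + (𝔢 : ℤ)) with hM
  have hMle : M ≤ -1 := by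
    apply max_le <;> omega
  have key : ϖ ^ (-i) * z * x = ϖ ^ (-i + (m : ℤ) + -1) * (u * w) := by
    rw [hxw, hzu, zpow_add₀ hϖ, zpow_add₀ hϖ]; ring
  refine ⟨x, ⟨w, hw, by simp only [smul_eq_mul]; exact hxw.symm⟩, ?_, hψx, ?_, ?_, ?_, ?_, ?_, ?_, ?_⟩
  · -- x ∈ ϖ^M • 𝒪
    refine ⟨ϖ ^ (-1 - M) * w, mul_mem (zpow_mem_aux 𝒪 hϖO (by omega)) hw, ?_⟩
    simp only [smul_eq_mul]; rw [ hxw, ← mul_assoc, ← zpow_add₀ hϖ]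
    norm_num
  · -- ϖ^{-i} z x ∈ ϖ^𝔢 • 𝒪
    refine ⟨ϖ ^ (-i + (m : ℤ) + -1 - 𝔢) * (u * w),
      mul_mem (zpow_mem_aux 𝒪 hϖO (by omega)) (mul_mem hu hw), ?_⟩
    simp only [smul_eq_mul]; rw [ key, ← mul_assoc, ← zpow_add₀ hϖ]
    ring_nf
  · -- 1 + ϖ^{-i} z x ∈ 𝒪
    rw [key]
    exact add_mem 𝒪.one_mem (mul_mem (zpow_mem_aux 𝒪 hϖO (by omega)) (mul_mem hu hw))
  · -- ϖ^{-i} x ∈ 𝒪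
    rw [hxw, ← mul_assoc, ← zpow_add₀ hϖ]
    exact mul_mem (zpow_mem_aux 𝒪 hϖO (by omega)) hw
  · -- -(ϖ^{-i} x z²) ∈ ϖ^𝔢 • 𝒪
    have key2 : -(ϖ ^ (-i) * x * z ^ 2) =
        ϖ ^ (-i + -1 + 2 * (m : ℤ)) * -(w * u ^ 2) := by
      rw [hxw, hzu, zpow_add₀ hϖ, zpow_add₀ hϖ, show (2 * (m : ℤ)) = (m : ℤ) + (m : ℤ) by ring,
        zpow_add₀ hϖ]
      ring
    refine ⟨ϖ ^ (-i + -1 + 2 * (m : ℤ) - 𝔢) * -(w * u ^ 2),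
      mul_mem (zpow_mem_aux 𝒪 hϖO (by omega)) (neg_mem (mul_mem hw (pow_mem hu 2))), ?_⟩
    simp only [smul_eq_mul]; rw [ key2, ← mul_assoc, ← zpow_add₀ hϖ]
    ring_nf
  · -- 1 - ϖ^{-i} z x ∈ 𝒪
    rw [key]
    exact sub_mem 𝒪.one_mem (mul_mem (zpow_mem_aux 𝒪 hϖO (by omega)) (mul_mem hu hw))
  · -- (1 - ϖ^{-i} z x) - 1 ∈ ϖ^𝔢 • 𝒪
    refine ⟨ϖ ^ (-i + (m : ℤ) + -1 - 𝔢) * -(u * w),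
      mul_mem (zpow_mem_aux 𝒪 hϖO (by omega)) (neg_mem (mul_mem hu hw)), ?_⟩
    simp only [smul_eq_mul]; rw [ key, ← mul_assoc, ← zpow_add₀ hϖ]
    ring_nf
  · -- determinant
    refine ⟨1, 𝒪.one_mem, ?_⟩
    rw [Matrix.det_fin_two_of]
    ring
end

section
/- Let F be a non-archimedean local field with ring of integers 𝒪 and maximal ideal 𝒫 = ϖ𝒪. For integers m ≥ 2𝔢 ≥ 0, set l = m − 𝔢, and define K(m;𝔢) to be the set of 4×4 matrices k in GSp(4,F) (with respect to the antidiagonal symplectic form given by antidiag(−1,−1,1,1)) such that det(k) ∈ 𝒪^×, and k has entries: row 1 in (𝒪,𝒪,𝒪,𝒫^{−l}), rows 2,3 in (𝒫^l,𝒪,𝒪,𝒪), row 4 in (𝒫^m,𝒫^l,𝒫^l,𝒪). Then K(m;𝔢) is a subgroup of GSp(4,F). -/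
open Pointwise
open Matrix

section Aux
variable {F : Type*} [Field F] {𝒪 : Subring F} {ϖ : F}

lemma aux_mem0 {x : F} : x ∈ (ϖ ^ (0 : ℤ)) • (𝒪 : Set F) ↔ x ∈ 𝒪 := by
  simp

lemma aux_add {r : ℤ} {x y : F} (hx : x ∈ (ϖ ^ r) • (𝒪 : Set F))
    (hy : y ∈ (ϖ ^ r) • (𝒪 : Set F)) : x + y ∈ (ϖ ^ r) • (𝒪 : Set F) := by
  obtain ⟨a, ha, rfl⟩ := hx
  obtain ⟨b, hb, rfl⟩ := hy
  exact ⟨a + b, add_mem ha hb, by simp [smul_eq_mul]; ring⟩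

lemma aux_mul (hϖO : ϖ ∈ 𝒪) (hϖ : ϖ ≠ 0) {p q r : ℤ} (hr : r ≤ p + q)
    {x y : F} (hx : x ∈ (ϖ ^ p) • (𝒪 : Set F)) (hy : y ∈ (ϖ ^ q) • (𝒪 : Set F)) :
    x * y ∈ (ϖ ^ r) • (𝒪 : Set F) := by
  obtain ⟨a, ha, rfl⟩ := hx
  obtain ⟨b, hb, rfl⟩ := hy
  refine ⟨ϖ ^ (p + q - r).toNat * a * b, mul_mem (mul_mem (pow_mem hϖO _) ha) hb, ?_⟩
  have h1 : (ϖ : F) ^ ((p + q - r).toNat : ℤ) = ϖ ^ (p + q - r) := by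
    rw [Int.toNat_of_nonneg (by omega)]
  have h2 : ϖ ^ r * ϖ ^ (p + q - r) = ϖ ^ p * ϖ ^ q := by
    rw [← zpow_add₀ hϖ, ← zpow_add₀ hϖ]; ring_nf
  simp only [smul_eq_mul, ← zpow_natCast, h1]
  calc ϖ ^ r * (ϖ ^ (p + q - r) * a * b) = (ϖ ^ r * ϖ ^ (p + q - r)) * a * b := by ring
    _ = ϖ ^ p * a * (ϖ ^ q * b) := by rw [h2]; ring

lemma aux_scale {c : F} (hc : c ∈ 𝒪) {r : ℤ} {x : F} (hx : x ∈ (ϖ ^ r) • (𝒪 : Set F)) :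
    c * x ∈ (ϖ ^ r) • (𝒪 : Set F) := by
  obtain ⟨a, ha, rfl⟩ := hx
  exact ⟨c * a, mul_mem hc ha, by simp [smul_eq_mul]; ring⟩

lemma aux_neg {r : ℤ} {x : F} (hx : x ∈ (ϖ ^ r) • (𝒪 : Set F)) :
    -x ∈ (ϖ ^ r) • (𝒪 : Set F) := by
  obtain ⟨a, ha, rfl⟩ := hx
  exact ⟨-a, neg_mem ha, by simp⟩

lemma aux_zero {r : ℤ} : (0 : F) ∈ (ϖ ^ r) • (𝒪 : Set F) :=
  ⟨0, zero_mem _, by simp⟩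

lemma aux_scale' {c a : F} (hc : c ∈ 𝒪) {x : F} (hx : x ∈ a • (𝒪 : Set F)) :
    c * x ∈ a • (𝒪 : Set F) := by
  obtain ⟨b, hb, rfl⟩ := hx
  exact ⟨c * b, mul_mem hc hb, by simp [smul_eq_mul]; ring⟩

lemma aux_neg' {a : F} {x : F} (hx : x ∈ a • (𝒪 : Set F)) :
    -x ∈ a • (𝒪 : Set F) := by
  obtain ⟨b, hb, rfl⟩ := hx
  exact ⟨-b, neg_mem hb, by simp⟩

end Aux

/-- The similitude matrix defining `GSp(4, F)`: `J = antidiag(−1, −1, 1, 1)`. -/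
def stmt12J (F : Type*) [Field F] : Matrix (Fin 4) (Fin 4) F :=
  !![0, 0, 0, -1; 0, 0, -1, 0; 0, 1, 0, 0; 1, 0, 0, 0]

section JFacts
variable {F : Type*} [Field F]

lemma stmt12J_transpose : (stmt12J F)ᵀ = -(stmt12J F) := by
  ext i j
  fin_cases i <;> fin_cases j <;>
    simp [stmt12J, Matrix.vecHead, Matrix.vecTail, Function.comp]

lemma stmt12J_mul_self : stmt12J F * stmt12J F = -1 := by
  ext i j
  fin_cases i <;> fin_cases j <;>
    simp [stmt12J, Matrix.mul_apply, Fin.sum_univ_four, Matrix.one_apply,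
      Matrix.vecHead, Matrix.vecTail, Function.comp]

lemma stmt12J_det_ne_zero : (stmt12J F).det ≠ 0 := by
  intro h
  have h2 : (stmt12J F).det * (stmt12J F).det = 1 := by
    rw [← Matrix.det_mul, stmt12J_mul_self]
    simp [Matrix.det_neg, Fintype.card_fin]
    norm_num
  rw [h, mul_zero] at h2
  exact zero_ne_one h2

lemma stmt12J_JJX (X : Matrix (Fin 4) (Fin 4) F) :
    stmt12J F * (stmt12J F * X) = -X := by
  rw [← Matrix.mul_assoc, stmt12J_mul_self, Matrix.neg_mul, Matrix.one_mul]

end JFacts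

/-- The exponent matrix of the lattice conditions. -/
def stmtA (m l : ℕ) : Fin 4 → Fin 4 → ℤ :=
  ![![0, 0, 0, -(l:ℤ)], ![(l:ℤ), 0, 0, 0], ![(l:ℤ), 0, 0, 0],
    ![(m:ℤ), (l:ℤ), (l:ℤ), 0]]

lemma stmtA_triangle (m 𝔢 l : ℕ) (hm : 2 * 𝔢 ≤ m) (hl : l = m - 𝔢) :
    ∀ i k j : Fin 4, stmtA m l i j ≤ stmtA m l i k + stmtA m l k j := by
  intro i k j
  fin_cases i <;> fin_cases k <;> fin_cases j <;>
    simp [stmtA, Matrix.vecHead, Matrix.vecTail, Function.comp] <;> omega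

lemma stmtA_mem {F : Type*} [Field F] (𝒪 : Subring F) (ϖ : F) (m l : ℕ)
    (N : Matrix (Fin 4) (Fin 4) F) :
    (∀ i j, N i j ∈ (ϖ ^ stmtA m l i j) • (𝒪 : Set F)) ↔
    (N 0 0 ∈ 𝒪 ∧ N 0 1 ∈ 𝒪 ∧ N 0 2 ∈ 𝒪 ∧ N 0 3 ∈ (ϖ ^ (-(l:ℤ))) • (𝒪 : Set F) ∧
     N 1 0 ∈ (ϖ ^ (l:ℤ)) • (𝒪 : Set F) ∧ N 1 1 ∈ 𝒪 ∧ N 1 2 ∈ 𝒪 ∧ N 1 3 ∈ 𝒪 ∧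
     N 2 0 ∈ (ϖ ^ (l:ℤ)) • (𝒪 : Set F) ∧ N 2 1 ∈ 𝒪 ∧ N 2 2 ∈ 𝒪 ∧ N 2 3 ∈ 𝒪 ∧
     N 3 0 ∈ (ϖ ^ (m:ℤ)) • (𝒪 : Set F) ∧ N 3 1 ∈ (ϖ ^ (l:ℤ)) • (𝒪 : Set F) ∧
     N 3 2 ∈ (ϖ ^ (l:ℤ)) • (𝒪 : Set F) ∧ N 3 3 ∈ 𝒪) := by
  constructor
  · intro h
    refine ⟨?_, ?_, ?_, ?_, ?_, ?_, ?_, ?_, ?_, ?_, ?_, ?_, ?_, ?_, ?_, ?_⟩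
    · simpa [stmtA, Matrix.vecHead, Matrix.vecTail] using h 0 0
    · simpa [stmtA, Matrix.vecHead, Matrix.vecTail] using h 0 1
    · simpa [stmtA, Matrix.vecHead, Matrix.vecTail] using h 0 2
    · simpa [stmtA, Matrix.vecHead, Matrix.vecTail] using h 0 3
    · simpa [stmtA, Matrix.vecHead, Matrix.vecTail] using h 1 0
    · simpa [stmtA, Matrix.vecHead, Matrix.vecTail] using h 1 1
    · simpa [stmtA, Matrix.vecHead, Matrix.vecTail] using h 1 2
    · simpa [stmtA, Matrix.vecHead, Matrix.vecTail] using h 1 3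
    · simpa [stmtA, Matrix.vecHead, Matrix.vecTail] using h 2 0
    · simpa [stmtA, Matrix.vecHead, Matrix.vecTail] using h 2 1
    · simpa [stmtA, Matrix.vecHead, Matrix.vecTail] using h 2 2
    · simpa [stmtA, Matrix.vecHead, Matrix.vecTail] using h 2 3
    · simpa [stmtA, Matrix.vecHead, Matrix.vecTail] using h 3 0
    · simpa [stmtA, Matrix.vecHead, Matrix.vecTail] using h 3 1
    · simpa [stmtA, Matrix.vecHead, Matrix.vecTail] using h 3 2
    · simpa [stmtA, Matrix.vecHead, Matrix.vecTail] using h 3 3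
  · rintro ⟨e00, e01, e02, e03, e10, e11, e12, e13, e20, e21, e22, e23,
      e30, e31, e32, e33⟩ i j
    fin_cases i <;> fin_cases j <;>
      first
        | assumption
        | exact aux_mem0.mpr (by assumption)

set_option maxHeartbeats 2000000 in
/-- Let `F` be a non-archimedean local field with ring of integers `𝒪` (a valuation ring
whose maximal ideal is generated by `ϖ`). For `m ≥ 2𝔢`, `l = m − 𝔢`, the set `K(m; 𝔢)`
of `k ∈ GSp(4, F)` with `det k ∈ 𝒪ˣ`, row 1 entries in `(𝒪, 𝒪, 𝒪, 𝒫^{−l})`, rows 2, 3 in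
`(𝒫^l, 𝒪, 𝒪, 𝒪)`, and row 4 in `(𝒫^m, 𝒫^l, 𝒫^l, 𝒪)` is a subgroup of `GSp(4, F)`. -/
theorem stmt_12 {F : Type*} [Field F] (𝒪 : Subring F) (ϖ : F)
    (hϖO : ϖ ∈ 𝒪) (hϖ : ϖ ≠ 0)
    -- 𝒪 is a valuation ring of F
    (hval : ∀ x : F, x ≠ 0 → x ∈ 𝒪 ∨ x⁻¹ ∈ 𝒪)
    -- every element of 𝒪 outside ϖ𝒪 is a unit (so ϖ generates the maximal ideal)
    (hunit : ∀ x ∈ 𝒪, x ∉ ϖ • (𝒪 : Set F) → ∃ y ∈ 𝒪, x * y = 1)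
    (m 𝔢 l : ℕ) (hm : 2 * 𝔢 ≤ m) (hl : l = m - 𝔢) :
    ∃ H : Subgroup (Matrix.GeneralLinearGroup (Fin 4) F),
      (H : Set (Matrix.GeneralLinearGroup (Fin 4) F)) =
        {g : Matrix.GeneralLinearGroup (Fin 4) F |
          -- g ∈ GSp(4, F)
          (∃ c : F, c ≠ 0 ∧
            Matrix.transpose (g : Matrix (Fin 4) (Fin 4) F) * stmt12J F * (g : Matrix (Fin 4) (Fin 4) F)
              = c • stmt12J F) ∧
          -- det g ∈ 𝒪ˣ
          ((g : Matrix (Fin 4) (Fin 4) F).det ∈ 𝒪 ∧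
            ∃ d ∈ 𝒪, (g : Matrix (Fin 4) (Fin 4) F).det * d = 1) ∧
          -- row 1
          (g : Matrix (Fin 4) (Fin 4) F) 0 0 ∈ 𝒪 ∧
          (g : Matrix (Fin 4) (Fin 4) F) 0 1 ∈ 𝒪 ∧
          (g : Matrix (Fin 4) (Fin 4) F) 0 2 ∈ 𝒪 ∧
          (g : Matrix (Fin 4) (Fin 4) F) 0 3 ∈ (ϖ ^ (-(l : ℤ))) • (𝒪 : Set F) ∧
          -- row 2
          (g : Matrix (Fin 4) (Fin 4) F) 1 0 ∈ (ϖ ^ (l : ℤ)) • (𝒪 : Set F) ∧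
          (g : Matrix (Fin 4) (Fin 4) F) 1 1 ∈ 𝒪 ∧
          (g : Matrix (Fin 4) (Fin 4) F) 1 2 ∈ 𝒪 ∧
          (g : Matrix (Fin 4) (Fin 4) F) 1 3 ∈ 𝒪 ∧
          -- row 3
          (g : Matrix (Fin 4) (Fin 4) F) 2 0 ∈ (ϖ ^ (l : ℤ)) • (𝒪 : Set F) ∧
          (g : Matrix (Fin 4) (Fin 4) F) 2 1 ∈ 𝒪 ∧
          (g : Matrix (Fin 4) (Fin 4) F) 2 2 ∈ 𝒪 ∧
          (g : Matrix (Fin 4) (Fin 4) F) 2 3 ∈ 𝒪 ∧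
          -- row 4
          (g : Matrix (Fin 4) (Fin 4) F) 3 0 ∈ (ϖ ^ (m : ℤ)) • (𝒪 : Set F) ∧
          (g : Matrix (Fin 4) (Fin 4) F) 3 1 ∈ (ϖ ^ (l : ℤ)) • (𝒪 : Set F) ∧
          (g : Matrix (Fin 4) (Fin 4) F) 3 2 ∈ (ϖ ^ (l : ℤ)) • (𝒪 : Set F) ∧
          (g : Matrix (Fin 4) (Fin 4) F) 3 3 ∈ 𝒪} := by
  classical
  refine ⟨{
    carrier := {g : Matrix.GeneralLinearGroup (Fin 4) F |
          (∃ c : F, c ≠ 0 ∧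
            Matrix.transpose (g : Matrix (Fin 4) (Fin 4) F) * stmt12J F * (g : Matrix (Fin 4) (Fin 4) F)
              = c • stmt12J F) ∧
          ((g : Matrix (Fin 4) (Fin 4) F).det ∈ 𝒪 ∧
            ∃ d ∈ 𝒪, (g : Matrix (Fin 4) (Fin 4) F).det * d = 1) ∧
          (g : Matrix (Fin 4) (Fin 4) F) 0 0 ∈ 𝒪 ∧
          (g : Matrix (Fin 4) (Fin 4) F) 0 1 ∈ 𝒪 ∧
          (g : Matrix (Fin 4) (Fin 4) F) 0 2 ∈ 𝒪 ∧
          (g : Matrix (Fin 4) (Fin 4) F) 0 3 ∈ (ϖ ^ (-(l : ℤ))) • (𝒪 : Set F) ∧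
          (g : Matrix (Fin 4) (Fin 4) F) 1 0 ∈ (ϖ ^ (l : ℤ)) • (𝒪 : Set F) ∧
          (g : Matrix (Fin 4) (Fin 4) F) 1 1 ∈ 𝒪 ∧
          (g : Matrix (Fin 4) (Fin 4) F) 1 2 ∈ 𝒪 ∧
          (g : Matrix (Fin 4) (Fin 4) F) 1 3 ∈ 𝒪 ∧
          (g : Matrix (Fin 4) (Fin 4) F) 2 0 ∈ (ϖ ^ (l : ℤ)) • (𝒪 : Set F) ∧
          (g : Matrix (Fin 4) (Fin 4) F) 2 1 ∈ 𝒪 ∧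
          (g : Matrix (Fin 4) (Fin 4) F) 2 2 ∈ 𝒪 ∧
          (g : Matrix (Fin 4) (Fin 4) F) 2 3 ∈ 𝒪 ∧
          (g : Matrix (Fin 4) (Fin 4) F) 3 0 ∈ (ϖ ^ (m : ℤ)) • (𝒪 : Set F) ∧
          (g : Matrix (Fin 4) (Fin 4) F) 3 1 ∈ (ϖ ^ (l : ℤ)) • (𝒪 : Set F) ∧
          (g : Matrix (Fin 4) (Fin 4) F) 3 2 ∈ (ϖ ^ (l : ℤ)) • (𝒪 : Set F) ∧
          (g : Matrix (Fin 4) (Fin 4) F) 3 3 ∈ 𝒪}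
    mul_mem' := ?_
    one_mem' := ?_
    inv_mem' := ?_ }, rfl⟩
  · -- mul_mem'
    intro a b ha hb
    obtain ⟨⟨ca, hca0, hsa⟩, ⟨hua, da, hda, huda⟩, hEa⟩ := ha
    obtain ⟨⟨cb, hcb0, hsb⟩, ⟨hub, db, hdb, hudb⟩, hEb⟩ := hb
    have haA := (stmtA_mem 𝒪 ϖ m l (a : Matrix (Fin 4) (Fin 4) F)).mpr hEa
    have hbA := (stmtA_mem 𝒪 ϖ m l (b : Matrix (Fin 4) (Fin 4) F)).mpr hEb
    have hA := stmtA_triangle m 𝔢 l hm hl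
    refine ⟨⟨ca * cb, mul_ne_zero hca0 hcb0, ?_⟩, ⟨?_, da * db, mul_mem hda hdb, ?_⟩, ?_⟩
    · rw [Units.val_mul, Matrix.transpose_mul]
      calc (b : Matrix (Fin 4) (Fin 4) F)ᵀ * (a : Matrix (Fin 4) (Fin 4) F)ᵀ * stmt12J F *
          ((a : Matrix (Fin 4) (Fin 4) F) * (b : Matrix (Fin 4) (Fin 4) F))
          = (b : Matrix (Fin 4) (Fin 4) F)ᵀ *
            ((a : Matrix (Fin 4) (Fin 4) F)ᵀ * stmt12J F * (a : Matrix (Fin 4) (Fin 4) F)) *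
            (b : Matrix (Fin 4) (Fin 4) F) := by
            simp only [Matrix.mul_assoc]
        _ = (b : Matrix (Fin 4) (Fin 4) F)ᵀ * (ca • stmt12J F) * (b : Matrix (Fin 4) (Fin 4) F) := by
            rw [hsa]
        _ = ca • ((b : Matrix (Fin 4) (Fin 4) F)ᵀ * stmt12J F * (b : Matrix (Fin 4) (Fin 4) F)) := by
            simp only [Matrix.mul_smul, Matrix.smul_mul]
        _ = ca • (cb • stmt12J F) := by rw [hsb]
        _ = (ca * cb) • stmt12J F := by rw [smul_smul]
    · rw [Units.val_mul, Matrix.det_mul]; exact mul_mem hua hub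
    · rw [Units.val_mul, Matrix.det_mul, mul_mul_mul_comm, huda, hudb, one_mul]
    · refine (stmtA_mem 𝒪 ϖ m l _).mp ?_
      intro i j
      have hcoe : ((a * b : (Matrix (Fin 4) (Fin 4) F)ˣ) : Matrix (Fin 4) (Fin 4) F) i j
          = ∑ k, (a : Matrix (Fin 4) (Fin 4) F) i k * (b : Matrix (Fin 4) (Fin 4) F) k j := by
        rw [Units.val_mul, Matrix.mul_apply]
      rw [hcoe, Fin.sum_univ_four]
      exact aux_add (aux_add (aux_add
        (aux_mul hϖO hϖ (hA i 0 j) (haA i 0) (hbA 0 j))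
        (aux_mul hϖO hϖ (hA i 1 j) (haA i 1) (hbA 1 j)))
        (aux_mul hϖO hϖ (hA i 2 j) (haA i 2) (hbA 2 j)))
        (aux_mul hϖO hϖ (hA i 3 j) (haA i 3) (hbA 3 j))
  · -- one_mem'
    refine ⟨⟨1, one_ne_zero, by simp⟩, ⟨by simpa using one_mem 𝒪, 1, one_mem _, by simp⟩, ?_⟩
    refine (stmtA_mem 𝒪 ϖ m l _).mp ?_
    intro i j
    rw [Units.val_one]
    by_cases hij : i = j
    · subst hij
      rw [Matrix.one_apply_eq]
      have h0 : stmtA m l i i = 0 := by fin_cases i <;> rfl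
      rw [h0]
      exact aux_mem0.mpr (one_mem _)
    · rw [Matrix.one_apply_ne hij]
      exact aux_zero
  · -- inv_mem'
    intro x hx
    obtain ⟨⟨c, hc0, hcsim⟩, ⟨hu, d, hd, hud⟩, hEx⟩ := hx
    have hxA := (stmtA_mem 𝒪 ϖ m l (x : Matrix (Fin 4) (Fin 4) F)).mpr hEx
    set M : Matrix (Fin 4) (Fin 4) F := (x : Matrix (Fin 4) (Fin 4) F) with hMdef
    have hcsim' : Mᵀ * (stmt12J F * M) = c • stmt12J F := by
      rw [← Matrix.mul_assoc]; exact hcsim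
    have hBM : (c⁻¹ • ((-(stmt12J F)) * Mᵀ * stmt12J F)) * M = 1 := by
      calc (c⁻¹ • ((-(stmt12J F)) * Mᵀ * stmt12J F)) * M
          = c⁻¹ • (-(stmt12J F * (Mᵀ * (stmt12J F * M)))) := by
            simp only [Matrix.smul_mul, Matrix.neg_mul, Matrix.mul_assoc]
        _ = c⁻¹ • (-(stmt12J F * (c • stmt12J F))) := by rw [hcsim']
        _ = 1 := by
            rw [Matrix.mul_smul, stmt12J_mul_self]
            simp [smul_smul, inv_mul_cancel₀ hc0]
    have hMinv : M⁻¹ = c⁻¹ • ((-(stmt12J F)) * Mᵀ * stmt12J F) := Matrix.inv_eq_left_inv hBM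
    have hMB : M * (c⁻¹ • ((-(stmt12J F)) * Mᵀ * stmt12J F)) = 1 := mul_eq_one_comm.mp hBM
    have hMMinv : M * M⁻¹ = 1 := by rw [hMinv]; exact hMB
    have hcoeinv : ((x⁻¹ : (Matrix (Fin 4) (Fin 4) F)ˣ) : Matrix (Fin 4) (Fin 4) F) = M⁻¹ := by
      rw [Matrix.coe_units_inv]
    have hdet0 : M.det ≠ 0 := left_ne_zero_of_mul_eq_one hud
    have h4 : M.det ^ 2 = c ^ 4 := by
      have h1 := congrArg Matrix.det hcsim
      rw [Matrix.det_mul, Matrix.det_mul, Matrix.det_transpose, Matrix.det_smul,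
        Fintype.card_fin] at h1
      have h2 : M.det ^ 2 * (stmt12J F).det = c ^ 4 * (stmt12J F).det := by
        linear_combination h1
      exact mul_right_cancel₀ stmt12J_det_ne_zero h2
    have hcO : c ∈ 𝒪 ∧ c⁻¹ ∈ 𝒪 := by
      rcases hval c hc0 with h | h
      · refine ⟨h, ?_⟩
        have hcc : c * (c ^ 3 * d ^ 2) = 1 := by
          calc c * (c ^ 3 * d ^ 2) = c ^ 4 * d ^ 2 := by ring
            _ = M.det ^ 2 * d ^ 2 := by rw [h4]
            _ = (M.det * d) ^ 2 := by ring
            _ = 1 := by rw [hud]; norm_num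
        rw [inv_eq_of_mul_eq_one_right hcc]
        exact mul_mem (pow_mem h 3) (pow_mem hd 2)
      · refine ⟨?_, h⟩
        have hcc : c = (c⁻¹) ^ 3 * M.det ^ 2 := by
          rw [h4]
          calc c = (c⁻¹ * c) ^ 3 * c := by rw [inv_mul_cancel₀ hc0]; ring
            _ = (c⁻¹) ^ 3 * c ^ 4 := by ring
        rw [hcc]
        exact mul_mem (pow_mem h 3) (pow_mem hu 2)
    have hdet1 : (M⁻¹).det * M.det = 1 := by
      rw [mul_comm, ← Matrix.det_mul, hMMinv, Matrix.det_one]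
    have hdetO : (M⁻¹).det ∈ 𝒪 := by
      have ha : M.det * (M⁻¹).det = M.det * d := by
        rw [← Matrix.det_mul, hMMinv, Matrix.det_one, hud]
      rw [mul_left_cancel₀ hdet0 ha]
      exact hd
    have htr : (M⁻¹)ᵀ * Mᵀ = 1 := by
      rw [← Matrix.transpose_mul, hMMinv, Matrix.transpose_one]
    have hsiminv : (M⁻¹)ᵀ * stmt12J F * M⁻¹ = c⁻¹ • stmt12J F := by
      rw [hMinv]
      simp only [Matrix.transpose_smul, Matrix.transpose_mul, Matrix.transpose_neg,
        Matrix.transpose_transpose, stmt12J_transpose, Matrix.smul_mul, Matrix.mul_smul,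
        Matrix.neg_mul, Matrix.mul_neg, neg_neg, smul_smul, Matrix.mul_assoc, stmt12J_JJX]
      have h5 : M * ((-(stmt12J F)) * Mᵀ * stmt12J F) = c • 1 := by
        have h5a := congrArg (fun Y => c • Y) hMB
        simpa [Matrix.mul_smul, smul_smul, mul_inv_cancel₀ hc0] using h5a
      have h5' : -(M * (stmt12J F * (Mᵀ * stmt12J F))) = c • 1 := by
        simpa [Matrix.neg_mul, Matrix.mul_neg, Matrix.mul_assoc] using h5
      have h6 : M * (stmt12J F * (Mᵀ * stmt12J F)) = (-c) • 1 :=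
        (neg_eq_iff_eq_neg.mp h5').trans (neg_smul c (1 : Matrix (Fin 4) (Fin 4) F)).symm
      rw [h6]
      simp [Matrix.mul_smul, Matrix.mul_one, smul_smul, neg_smul, smul_neg, neg_neg,
        inv_mul_cancel₀ hc0]
    have hinvA : ∀ i j, (M⁻¹) i j ∈ (ϖ ^ stmtA m l i j) • (𝒪 : Set F) := by
      have hEx' := hEx
      simp only [_root_.zpow_neg, _root_.zpow_natCast] at hEx'
      obtain ⟨f00, f01, f02, f03, f10, f11, f12, f13, f20, f21, f22, f23,
        f30, f31, f32, f33⟩ := hEx'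
      have hciO : c⁻¹ ∈ 𝒪 := hcO.2
      intro i j
      rw [hMinv]
      fin_cases i <;> fin_cases j <;>
        simp [Matrix.smul_apply, smul_eq_mul, Matrix.mul_apply, Matrix.vecMul,
          dotProduct, Fin.sum_univ_four, stmt12J, Matrix.transpose_apply,
          Matrix.neg_apply, stmtA, Matrix.vecHead, Matrix.vecTail, _root_.zpow_neg,
          _root_.zpow_natCast] <;>
        first
          | exact mul_mem hciO (by assumption)
          | exact neg_mem (mul_mem hciO (by assumption))
          | exact aux_scale' hciO (by assumption)
          | exact aux_neg' (aux_scale' hciO (by assumption))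
          | exact aux_scale' hciO (aux_neg' (by assumption))
    refine ⟨⟨c⁻¹, inv_ne_zero hc0, ?_⟩, ⟨?_, M.det, hu, ?_⟩, ?_⟩
    · rw [hcoeinv]; exact hsiminv
    · rw [hcoeinv]; exact hdetO
    · rw [hcoeinv]; exact hdet1
    · refine (stmtA_mem 𝒪 ϖ m l _).mp ?_
      intro i j
      rw [hcoeinv]
      exact hinvA i j
end

section
/- Let G be an ℓ-group, G₀ ⊴ G a closed normal subgroup, and (π, V) a smooth representation of G that is admissible as a G₀-representation. Then for every open compact subgroup L of G there exists an open compact subgroup L' ⊆ L of G with L' ∩ G₀ = L ∩ G₀ and V^{L'} = V^{L'∩G₀}. -/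
/-!
By admissibility, `W = V^{L ∩ G₀}` is finite dimensional, and by smoothness each of finitely many
spanning vectors of `W` is fixed by an open subgroup; so some open `K ≤ L` fixes `W` pointwise.
Then `L' = (L ∩ G₀) ⊔ K` is open, hence closed in the compact `L`, meets `G₀` in `L ∩ G₀`,
and fixes `W` pointwise, so `V^{L' ∩ G₀} = W = V^{L'}`.
-/

namespace Representation

variable {k G V : Type*} [CommRing k] [Group G] [AddCommGroup V] [Module k V]
  (ρ : Representation k G V)

def fixingSubgroup (S : Set V) : Subgroup G where
  carrier := {g | ∀ v ∈ S, ρ g v = v}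
  one_mem' := by simp
  mul_mem' {a b} ha hb v hv := by rw [map_mul, Module.End.mul_apply, hb v hv, ha v hv]
  inv_mem' {a} ha v hv := by
    conv_lhs => rw [← ha v hv]
    rw [← Module.End.mul_apply, ← map_mul, inv_mul_cancel, map_one, Module.End.one_apply]

variable {ρ}

theorem le_fixingSubgroup_iff {H : Subgroup G} {S : Set V} :
    H ≤ ρ.fixingSubgroup S ↔ S ⊆ invariants (ρ.comp H.subtype) :=
  ⟨fun h v hv g => h g.2 v hv, fun h g hg _ hv => h hv ⟨g, hg⟩⟩

theorem fixingSubgroup_span (S : Set V) :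
    ρ.fixingSubgroup (Submodule.span k S) = ρ.fixingSubgroup S := by
  ext g
  refine ⟨fun hg v hv => hg v (Submodule.subset_span hv), fun hg v hv => ?_⟩
  let F : Submodule k V := LinearMap.ker (ρ g - LinearMap.id)
  have hSF : Submodule.span k S ≤ F :=
    Submodule.span_le.2 fun w hw => by simp [F, hg w hw]
  simpa [F, sub_eq_zero] using hSF hv

variable [TopologicalSpace G]

theorem exists_isOpen_le_fixingSubgroup {S : Set V} (hS : S.Finite)
    (hsmooth : ∀ v ∈ S, ∃ K : Subgroup G, IsOpen (K : Set G) ∧ ∀ g ∈ K, ρ g v = v) :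
    ∃ K : Subgroup G, IsOpen (K : Set G) ∧ K ≤ ρ.fixingSubgroup S := by
  choose! K hKo hKv using hsmooth
  have : Finite S := hS
  refine ⟨⨅ v : S, K v, ?_, fun g hg v hv => hKv v hv g (Subgroup.mem_iInf.1 hg ⟨v, hv⟩)⟩
  rw [Subgroup.coe_iInf]
  exact isOpen_iInter_of_finite fun v => hKo v v.2

theorem exists_isOpen_le_fixingSubgroup_of_fg {W : Submodule k V} (hW : W.FG)
    (hsmooth : ∀ v ∈ W, ∃ K : Subgroup G, IsOpen (K : Set G) ∧ ∀ g ∈ K, ρ g v = v) :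
    ∃ K : Subgroup G, IsOpen (K : Set G) ∧ K ≤ ρ.fixingSubgroup W := by
  obtain ⟨t, rfl⟩ := hW
  rw [fixingSubgroup_span]
  exact exists_isOpen_le_fixingSubgroup t.finite_toSet
    fun v hv => hsmooth v (Submodule.subset_span hv)

end Representation

theorem stmt_15_general {G : Type*} [Group G] [TopologicalSpace G] [IsTopologicalGroup G]
    (G₀ : Subgroup G) (hG₀ : IsClosed (G₀ : Set G))
    {V : Type*} [AddCommGroup V] [Module ℂ V] (π : Representation ℂ G V)
    -- π is smooth
    (hsmooth : ∀ v : V, ∃ K : Subgroup G, IsOpen (K : Set G) ∧ IsCompact (K : Set G) ∧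
      ∀ g ∈ K, π g v = v)
    -- π is admissible as a G₀-representation: for every open compact subgroup K₀ of G₀,
    -- the fixed vectors V^{K₀} span a finite-dimensional subspace
    (hadm : ∀ K₀ : Subgroup G, K₀ ≤ G₀ → IsCompact (K₀ : Set G) →
      (∃ U : Set G, IsOpen U ∧ (K₀ : Set G) = U ∩ (G₀ : Set G)) →
      ∃ s : Finset V, ∀ v : V, (∀ g ∈ K₀, π g v = v) →
        v ∈ Submodule.span ℂ (s : Set V))
    (L : Subgroup G) (hLo : IsOpen (L : Set G)) (hLc : IsCompact (L : Set G)) :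
    ∃ L' : Subgroup G, L' ≤ L ∧ IsOpen (L' : Set G) ∧ IsCompact (L' : Set G) ∧
      L' ⊓ G₀ = L ⊓ G₀ ∧
      ∀ v : V, (∀ g ∈ L' ⊓ G₀, π g v = v) ↔ (∀ g ∈ L', π g v = v) := by
  obtain ⟨s, hs⟩ := hadm (L ⊓ G₀) inf_le_right (hLc.inter_right hG₀) ⟨L, hLo, rfl⟩
  set W := Representation.invariants (π.comp (L ⊓ G₀).subtype)
  have hWs : W ≤ Submodule.span ℂ s := fun v hv => hs v fun g hg => hv ⟨g, hg⟩
  have hWfg : W.FG := (Submodule.fg_span s.finite_toSet).of_le hWs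
  obtain ⟨K, hKo, hKW⟩ := π.exists_isOpen_le_fixingSubgroup_of_fg hWfg fun v _ =>
    let ⟨K, hKo, _, hKv⟩ := hsmooth v; ⟨K, hKo, hKv⟩
  set L' := (L ⊓ G₀) ⊔ (L ⊓ K)
  have hL'L : L' ≤ L := sup_le inf_le_left inf_le_left
  have hL'o : IsOpen (L' : Set G) := Subgroup.isOpen_mono le_sup_right (hLo.inter hKo)
  have hL'W : L' ≤ π.fixingSubgroup W :=
    sup_le (Representation.le_fixingSubgroup_iff.2 subset_rfl) (inf_le_right.trans hKW)
  refine ⟨L', hL'L, hL'o, hLc.of_isClosed_subset (L'.isClosed_of_isOpen hL'o) hL'L,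
    le_antisymm (inf_le_inf_right G₀ hL'L) (le_inf le_sup_left inf_le_right),
    fun v => ⟨fun hv g hg => hL'W hg v ?_, fun hv g hg => hv g hg.1⟩⟩
  exact fun g => hv g ⟨le_sup_left (a := L ⊓ G₀) g.2, g.2.2⟩

/-- Let `G` be an ℓ-group, `G₀ ⊴ G` a closed normal subgroup, and `(π, V)` a smooth
representation of `G` that is admissible as a `G₀`-representation. Then for every open
compact subgroup `L` of `G` there exists an open compact subgroup `L' ⊆ L` with
`L' ∩ G₀ = L ∩ G₀` and `V^{L'} = V^{L' ∩ G₀}`. -/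
theorem stmt_15 {G : Type*} [Group G] [TopologicalSpace G] [IsTopologicalGroup G]
    [LocallyCompactSpace G] [TotallyDisconnectedSpace G]
    (G₀ : Subgroup G) [G₀.Normal] (hG₀ : IsClosed (G₀ : Set G))
    {V : Type*} [AddCommGroup V] [Module ℂ V] (π : Representation ℂ G V)
    -- π is smooth
    (hsmooth : ∀ v : V, ∃ K : Subgroup G, IsOpen (K : Set G) ∧ IsCompact (K : Set G) ∧
      ∀ g ∈ K, π g v = v)
    -- π is admissible as a G₀-representation: for every open compact subgroup K₀ of G₀,
    -- the fixed vectors V^{K₀} span a finite-dimensional subspace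
    (hadm : ∀ K₀ : Subgroup G, K₀ ≤ G₀ → IsCompact (K₀ : Set G) →
      (∃ U : Set G, IsOpen U ∧ (K₀ : Set G) = U ∩ (G₀ : Set G)) →
      ∃ s : Finset V, ∀ v : V, (∀ g ∈ K₀, π g v = v) →
        v ∈ Submodule.span ℂ (s : Set V))
    (L : Subgroup G) (hLo : IsOpen (L : Set G)) (hLc : IsCompact (L : Set G)) :
    ∃ L' : Subgroup G, L' ≤ L ∧ IsOpen (L' : Set G) ∧ IsCompact (L' : Set G) ∧
      L' ⊓ G₀ = L ⊓ G₀ ∧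
      ∀ v : V, (∀ g ∈ L' ⊓ G₀, π g v = v) ↔ (∀ g ∈ L', π g v = v) :=
  stmt_15_general G₀ hG₀ π hsmooth hadm L hLo hLc
end
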